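/- arXiv:1611.08339 — 2 statements merged into one kernel-verified Lean document; each statement's English description precedes it below -/
import Mathlib

section
/- Let ℓ : V_{k,q} → {1,…,k} be a Sperner-admissible labeling (k ≥ 2, q ≥ 2), and for each i let C_i = { b ∈ V_{k,q-1} : ℓ(v) = i for every v ∈ e(b) }. Then: (1) every b ∈ C_i satisfies b_i > 0, so the map φ_i(b) = b − e_i sends C_i into V_{k,q-2}; (2) each φ_i is injective on C_i; and (3) the images φ_i[C_i] for i = 1, …, k are pairwise disjoint subsets of V_{k,q-2}. -/
/-!
A vertex `b + e_j` with `j ≠ i` of a cell of colour `i` carries the label `i` while its `i`-th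
coordinate is `b_i`, so admissibility forces `b_i > 0`. Then `b - e_i + e_i = b`, which gives
injectivity, and `b - e_i = b' - e_j` makes `b + e_j = b' + e_i` a common vertex of the cells
`e(b)` and `e(b')`, so their colours agree.
-/

namespace SpernerLattice

variable {ι : Type*} [DecidableEq ι]

theorem single_one_le_iff {b : ι → ℕ} {i : ι} : Pi.single i 1 ≤ b ↔ 0 < b i := by
  refine ⟨fun h => by simpa [Nat.one_le_iff_ne_zero, Nat.pos_iff_ne_zero] using h i,
    fun h t => ?_⟩
  by_cases ht : t = i
  · subst ht
    simpa [Nat.one_le_iff_ne_zero, Nat.pos_iff_ne_zero] using h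
  · simp [ht]

theorem injOn_sub_single_one (i : ι) :
    Set.InjOn (· - Pi.single i 1) {b : ι → ℕ | 0 < b i} :=
  fun _ hb _ hb' h => (tsub_left_inj (single_one_le_iff.2 hb) (single_one_le_iff.2 hb')).1 h

theorem add_single_one_eq_of_sub_single_one_eq {b b' : ι → ℕ} {i j : ι} (hb : 0 < b i)
    (hb' : 0 < b' j) (h : b - Pi.single i 1 = b' - Pi.single j 1) :
    b + Pi.single j 1 = b' + Pi.single i 1 := by
  rw [← tsub_add_cancel_of_le (single_one_le_iff.2 hb), h, add_right_comm,
    tsub_add_cancel_of_le (single_one_le_iff.2 hb')]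

def IsMonochromatic (ℓ : (ι → ℕ) → ι) (b : ι → ℕ) (i : ι) : Prop :=
  ∀ j, ℓ (b + Pi.single j 1) = i

theorem IsMonochromatic.eq {ℓ : (ι → ℕ) → ι} {b b' : ι → ℕ} {i j : ι}
    (hmono : IsMonochromatic ℓ b i) (hmono' : IsMonochromatic ℓ b' j) (hb : 0 < b i)
    (hb' : 0 < b' j) (h : b - Pi.single i 1 = b' - Pi.single j 1) : i = j :=
  calc i = ℓ (b + Pi.single j 1) := (hmono j).symm
    _ = ℓ (b' + Pi.single i 1) := by rw [add_single_one_eq_of_sub_single_one_eq hb hb' h]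
    _ = j := hmono' i

variable [Fintype ι]

theorem sum_add_single_one (b : ι → ℕ) (j : ι) :
    ∑ t, (b + Pi.single j 1 : ι → ℕ) t = ∑ t, b t + 1 := by
  simp [Finset.sum_add_distrib]

theorem sum_sub_single_one {b : ι → ℕ} {i : ι} (hi : 0 < b i) :
    ∑ t, (b - Pi.single i 1 : ι → ℕ) t = ∑ t, b t - 1 := by
  conv_rhs => rw [← tsub_add_cancel_of_le (single_one_le_iff.2 hi), sum_add_single_one]
  rfl

theorem IsMonochromatic.pos [Nontrivial ι] {ℓ : (ι → ℕ) → ι} {q : ℕ}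
    (hℓ : ∀ a : ι → ℕ, ∑ t, a t = q → 0 < a (ℓ a)) {b : ι → ℕ} {i : ι}
    (hmono : IsMonochromatic ℓ b i) (hb : ∑ t, b t + 1 = q) : 0 < b i := by
  obtain ⟨j, hji⟩ := exists_ne i
  have := hℓ _ ((sum_add_single_one b j).trans hb)
  rwa [hmono j, Pi.add_apply, Pi.single_eq_of_ne' hji, add_zero] at this

end SpernerLattice

open SpernerLattice

/-- Let `ℓ : V_{k,q} → {1,…,k}` be Sperner-admissible (`k ≥ 2`, `q ≥ 2`)
and let `C_i` be the set of `b ∈ V_{k,q-1}` whose cell `e(b)` is monochromatic in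
color `i`. Then: (1) every `b ∈ C_i` has `b_i > 0`, so `φ_i(b) = b - e_i` maps `C_i`
into `V_{k,q-2}`; (2) each `φ_i` is injective on `C_i`; (3) the images `φ_i[C_i]`
are pairwise disjoint. -/
theorem monochromatic_injection_into_smaller_lattice (k q : ℕ) (hk : 2 ≤ k) (hq : 2 ≤ q)
    (ℓ : (Fin k → ℕ) → Fin k)
    (hℓ : ∀ a : Fin k → ℕ, (∑ i, a i) = q → 0 < a (ℓ a))
    (C : Fin k → Set (Fin k → ℕ))
    (hC : ∀ i : Fin k, C i = {b : Fin k → ℕ | (∑ t, b t) = q - 1 ∧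
      ∀ j : Fin k, ℓ (fun t => b t + if t = j then 1 else 0) = i})
    (φ : Fin k → (Fin k → ℕ) → (Fin k → ℕ))
    (hφ : ∀ (i : Fin k) (b : Fin k → ℕ), φ i b = fun t => b t - if t = i then 1 else 0) :
    (∀ i : Fin k, ∀ b ∈ C i, 0 < b i ∧ (∑ t, φ i b t) = q - 2) ∧
    (∀ i : Fin k, Set.InjOn (φ i) (C i)) ∧
    (∀ i j : Fin k, i ≠ j → ∀ b ∈ C i, ∀ b' ∈ C j, φ i b ≠ φ j b') := by
  have hsingle (j : Fin k) : (Pi.single j 1 : Fin k → ℕ) = fun t => if t = j then 1 else 0 :=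
    funext fun t => Pi.single_apply j 1 t
  have hφ' (i : Fin k) (b : Fin k → ℕ) : φ i b = b - Pi.single i 1 := by
    rw [hφ, hsingle]
    rfl
  have hmem {i : Fin k} {b : Fin k → ℕ} (hb : b ∈ C i) :
      ∑ t, b t = q - 1 ∧ IsMonochromatic ℓ b i := by
    rw [hC] at hb
    exact ⟨hb.1, fun j => by rw [hsingle]; exact hb.2 j⟩
  have : Nontrivial (Fin k) := Fin.nontrivial_iff_two_le.2 hk
  have hpos {i : Fin k} {b : Fin k → ℕ} (hb : b ∈ C i) : 0 < b i :=
    (hmem hb).2.pos hℓ (by rw [(hmem hb).1]; omega)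
  refine ⟨fun i b hb => ⟨hpos hb, ?_⟩, fun i b hb b' hb' h => ?_, fun i j hij b hb b' hb' h => ?_⟩
  · rw [hφ', sum_sub_single_one (hpos hb), (hmem hb).1]
    omega
  · exact injOn_sub_single_one i (hpos hb) (hpos hb') (by rwa [hφ', hφ'] at h)
  · exact hij ((hmem hb).2.eq (hmem hb').2 (hpos hb) (hpos hb') (by rwa [hφ', hφ'] at h))
end

section
/- Let k ≥ 2, let (A_1,…,A_k) be a Sperner-admissible partition of Δ_k with separating set S = ∪_{i≠j}(A_i ∩ A_j), let ε₀ = inf { x_i : i ∈ {1,…,k}, x ∈ A_i }, and fix ε with 0 < ε < ε₀/2. Set ε' = ε√2, A'_i = A_i \ S_ε where S_ε = { x ∈ Δ_k : dist(x, S) ≤ ε }, and A''_i = A'_i − ε'·e_i (the translate of A'_i by −ε' in the i-th coordinate direction). Then the sets A''_1, …, A''_k are pairwise disjoint, and each A''_i is contained in the scaled simplex (1−ε')·Δ_k = { x ∈ ℝ^k : x ≥ 0, Σ x_i = 1−ε' }. -/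
/-!
If `x ∈ A i` and `y ∈ A j`, `i ≠ j`, are shifted to the same point, then
`x - y = ε' • (e i - e j)`, so `dist x y = ε' * √2 = 2 * ε`. The segment `[x, y]` lies in the
convex set `Δ`, so it is covered by the two closed sets `A i` and `⋃ t ≠ i, A t`; being
connected, it meets both, at a point `z ∈ S`. As `dist x z + dist z y = 2 * ε`, one of `x`, `y`
lies within `ε` of `S`. The shifted sets lie in `(1 - ε') • Δ` because `x i ≥ ε₀ > 2 * ε > ε'`.
-/

open Metric

section

variable {α ι : Type*}

def separatingSet (A : ι → Set α) : Set α := ⋃ (i) (j) (_ : i ≠ j), A i ∩ A j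

lemma IsPreconnected.inter_separatingSet_nonempty [TopologicalSpace α] [Finite ι]
    {A : ι → Set α} (hA : ∀ i, IsClosed (A i)) {s : Set α} (hs : IsPreconnected s)
    (hsA : s ⊆ ⋃ i, A i) {x y : α} {i j : ι} (hij : i ≠ j) (hx : x ∈ s ∩ A i)
    (hy : y ∈ s ∩ A j) : (s ∩ separatingSet A).Nonempty := by
  have hrest : IsClosed (⋃ t ∈ {t | t ≠ i}, A t) :=
    (Set.toFinite _).isClosed_biUnion fun t _ => hA t
  have hcover : s ⊆ A i ∪ ⋃ t ∈ {t | t ≠ i}, A t := by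
    intro z hz
    obtain ⟨t, hzt⟩ := Set.mem_iUnion.mp (hsA hz)
    rcases eq_or_ne t i with rfl | hti
    · exact Or.inl hzt
    · exact Or.inr (Set.mem_biUnion hti hzt)
  obtain ⟨z, hzs, hzi, hzrest⟩ := isPreconnected_closed_iff.mp hs _ _ (hA i) hrest hcover
    ⟨x, hx.1, hx.2⟩ ⟨y, hy.1, Set.mem_biUnion hij.symm hy.2⟩
  obtain ⟨t, hti, hzt⟩ := Set.mem_iUnion₂.mp hzrest
  exact ⟨z, hzs, Set.mem_iUnion₂.mpr ⟨i, t, Set.mem_iUnion.mpr ⟨Ne.symm hti, hzi, hzt⟩⟩⟩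

end

lemma two_mul_lt_dist_of_lt_infDist_separatingSet {E ι : Type*} [NormedAddCommGroup E]
    [NormedSpace ℝ E] [Finite ι] {A : ι → Set E} (hA : ∀ i, IsClosed (A i)) {x y : E}
    (hxy : segment ℝ x y ⊆ ⋃ i, A i) {i j : ι} (hij : i ≠ j) (hx : x ∈ A i) (hy : y ∈ A j)
    {ε : ℝ} (hεx : ε < infDist x (separatingSet A)) (hεy : ε < infDist y (separatingSet A)) :
    2 * ε < dist x y := by
  obtain ⟨z, hz, hzS⟩ := (convex_segment x y).isPreconnected.inter_separatingSet_nonempty hA hxy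
    hij ⟨left_mem_segment ℝ x y, hx⟩ ⟨right_mem_segment ℝ x y, hy⟩
  have hxz := infDist_le_dist_of_mem (x := x) hzS
  have hyz := infDist_le_dist_of_mem (x := y) hzS
  rw [← dist_add_dist_of_mem_segment hz, dist_comm z y]
  linarith

namespace EuclideanSpace

variable {ι : Type*} [DecidableEq ι]

omit [DecidableEq ι] in
lemma convex_stdSimplex [Fintype ι] :
    Convex ℝ {x : EuclideanSpace ℝ ι | (∀ i, 0 ≤ x i) ∧ ∑ i, x i = 1} :=
  (_root_.convex_stdSimplex ℝ ι).linear_preimage (WithLp.linearEquiv 2 ℝ (ι → ℝ)).toLinearMap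

lemma norm_single_sub_single [Fintype ι] {i j : ι} (hij : i ≠ j) (a b : ℝ) :
    ‖single i a - single j b‖ = √(a ^ 2 + b ^ 2) := by
  rw [eq_comm, Real.sqrt_eq_iff_eq_sq (by positivity) (norm_nonneg _), norm_sub_sq_real,
    inner_single_left]
  simp [hij]

lemma dist_eq_of_sub_smul_single_eq [Fintype ι] {x y : EuclideanSpace ℝ ι} {i j : ι}
    (hij : i ≠ j) {c : ℝ} (h : x - c • single i 1 = y - c • single j 1) :
    dist x y = |c| * √2 := by
  have hxy : x - y = c • (single i 1 - single j 1) := by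
    linear_combination (norm := module) h
  rw [dist_eq_norm, hxy, norm_smul, norm_single_sub_single hij, Real.norm_eq_abs]
  norm_num

lemma sub_smul_single_apply (x : EuclideanSpace ℝ ι) (i t : ι) (c : ℝ) :
    (x - c • single i 1 : EuclideanSpace ℝ ι) t = x t - if t = i then c else 0 := by
  simp [PiLp.single_apply]

lemma sub_smul_single_mem_scaled_stdSimplex [Fintype ι] {x : EuclideanSpace ℝ ι}
    (hx : (∀ t, 0 ≤ x t) ∧ ∑ t, x t = 1) {i : ι} {c : ℝ} (hc : c ≤ x i) :
    (∀ t, 0 ≤ (x - c • single i 1 : EuclideanSpace ℝ ι) t) ∧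
      ∑ t, (x - c • single i 1 : EuclideanSpace ℝ ι) t = 1 - c := by
  refine ⟨fun t => ?_, by simp [Finset.sum_sub_distrib, hx.2]⟩
  rw [sub_smul_single_apply]
  split_ifs with hti
  · subst hti; linarith
  · simpa using hx.1 t

end EuclideanSpace

theorem shifted_sets_disjoint_in_scaled_simplex_general (k : ℕ)
    (A : Fin k → Set (EuclideanSpace ℝ (Fin k)))
    (Δ : Set (EuclideanSpace ℝ (Fin k)))
    (hΔ : Δ = {x : EuclideanSpace ℝ (Fin k) | (∀ i, 0 ≤ x i) ∧ ∑ i, x i = 1})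
    (hclosed : ∀ i, IsClosed (A i))
    (hcover : (⋃ i, A i) = Δ)
    (ε₀ : ℝ) (hε₀ : ε₀ = sInf {r : ℝ | ∃ i : Fin k, ∃ x ∈ A i, r = x i})
    (ε : ℝ) (hε : 0 < ε) (hεsmall : ε < ε₀ / 2)
    (S : Set (EuclideanSpace ℝ (Fin k))) (hS : S = ⋃ (i) (j) (_ : i ≠ j), A i ∩ A j)
    (A'' : Fin k → Set (EuclideanSpace ℝ (Fin k)))
    (hA'' : ∀ i, A'' i =
      (fun x => x - (ε * Real.sqrt 2) • EuclideanSpace.single i (1 : ℝ)) ''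
        (A i \ {x ∈ Δ | Metric.infDist x S ≤ ε})) :
    (∀ i j, i ≠ j → Disjoint (A'' i) (A'' j)) ∧
    (∀ i, A'' i ⊆
      {x : EuclideanSpace ℝ (Fin k) | (∀ t, 0 ≤ x t) ∧ ∑ t, x t = 1 - ε * Real.sqrt 2}) := by
  subst hS hε₀
  have hAΔ : ∀ i, A i ⊆ Δ := fun i => hcover ▸ Set.subset_iUnion A i
  have hsimplex : ∀ i, ∀ x ∈ A i, (∀ t, 0 ≤ x t) ∧ ∑ t, x t = 1 := fun i x hx => by
    have hxΔ := hAΔ i hx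
    rwa [hΔ] at hxΔ
  refine ⟨fun i j hij => ?_, fun i => ?_⟩
  · rw [hA'' i, hA'' j, Set.disjoint_left]
    rintro _ ⟨x, ⟨hx, hxS⟩, rfl⟩ ⟨y, ⟨hy, hyS⟩, hyx⟩
    have hconv : Convex ℝ Δ := hΔ ▸ EuclideanSpace.convex_stdSimplex
    have hlt := two_mul_lt_dist_of_lt_infDist_separatingSet hclosed
      (hcover ▸ hconv.segment_subset (hAΔ i hx) (hAΔ j hy)) hij hx hy
      (not_le.mp fun h => hxS ⟨hAΔ i hx, h⟩) (not_le.mp fun h => hyS ⟨hAΔ j hy, h⟩)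
    rw [EuclideanSpace.dist_eq_of_sub_smul_single_eq hij hyx.symm, abs_of_pos (by positivity),
      mul_assoc, Real.mul_self_sqrt zero_le_two] at hlt
    linarith
  · rw [hA'' i]
    rintro _ ⟨x, ⟨hx, -⟩, rfl⟩
    have hε₀x : sInf {r : ℝ | ∃ i : Fin k, ∃ x ∈ A i, r = x i} ≤ x i :=
      csInf_le ⟨0, by rintro _ ⟨j, y, hy, rfl⟩; exact (hsimplex j y hy).1 j⟩ ⟨i, x, hx, rfl⟩
    have hshift : ε * √2 ≤ x i := by
      nlinarith [Real.sqrt_two_lt_three_halves]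
    exact EuclideanSpace.sub_smul_single_mem_scaled_stdSimplex (hsimplex i x hx) hshift

/-- For a Sperner-admissible partition `(A_1,…,A_k)` of `Δ_k` (`k ≥ 2`),
`ε₀ = inf {x_i : i ∈ [k], x ∈ A_i}`, `0 < ε < ε₀/2` and `ε' = ε√2`, the shifted sets
`A''_i = (A_i \ S_ε) − ε'·e_i` are pairwise disjoint and contained in the scaled
simplex `(1−ε')·Δ_k = {x ≥ 0 : Σ x_i = 1−ε'}`. -/
theorem shifted_sets_disjoint_in_scaled_simplex (k : ℕ) (hk : 2 ≤ k)
    (A : Fin k → Set (EuclideanSpace ℝ (Fin k)))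
    (Δ : Set (EuclideanSpace ℝ (Fin k)))
    (hΔ : Δ = {x : EuclideanSpace ℝ (Fin k) | (∀ i, 0 ≤ x i) ∧ ∑ i, x i = 1})
    (hclosed : ∀ i, IsClosed (A i))
    (hcover : (⋃ i, A i) = Δ)
    (hbd : ∀ i j, i ≠ j → A i ∩ A j ⊆ frontier (A i) ∩ frontier (A j))
    (hadm : ∀ i, ∀ x ∈ A i, 0 < x i)
    (ε₀ : ℝ) (hε₀ : ε₀ = sInf {r : ℝ | ∃ i : Fin k, ∃ x ∈ A i, r = x i})
    (ε : ℝ) (hε : 0 < ε) (hεsmall : ε < ε₀ / 2)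
    (S : Set (EuclideanSpace ℝ (Fin k))) (hS : S = ⋃ (i) (j) (_ : i ≠ j), A i ∩ A j)
    (A'' : Fin k → Set (EuclideanSpace ℝ (Fin k)))
    (hA'' : ∀ i, A'' i =
      (fun x => x - (ε * Real.sqrt 2) • EuclideanSpace.single i (1 : ℝ)) ''
        (A i \ {x ∈ Δ | Metric.infDist x S ≤ ε})) :
    (∀ i j, i ≠ j → Disjoint (A'' i) (A'' j)) ∧
    (∀ i, A'' i ⊆
      {x : EuclideanSpace ℝ (Fin k) | (∀ t, 0 ≤ x t) ∧ ∑ t, x t = 1 - ε * Real.sqrt 2}) :=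
  shifted_sets_disjoint_in_scaled_simplex_general k A Δ hΔ hclosed hcover ε₀ hε₀ ε hε hεsmall S hS
    A'' hA''
end
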